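/- Let m be a positive integer and n = 2^m - 1. The n × n matrix A over ℤ/2ℤ defined by a_{i,j} = 1 if |i - j| = 1 and a_{i,j} = 0 otherwise satisfies A^n = 0. -/

import Mathlib

/-!
Over a ring of characteristic 2, send the vertex `j` of the path on `n` vertices to
`x^(j+1) + x^(-(j+1))` in the group algebra of `ℤ/2(n+1)`. This folds the cycle of length
`2(n+1)` onto the path, and the adjacency matrix becomes multiplication by `x + x⁻¹`: the missing
neighbours of the two end vertices correspond to `x^0 + x^0` and `x^(n+1) + x^(-(n+1))`, which
vanish in characteristic 2. By the Frobenius, `(x + x⁻¹)^(2^m) = x^(2^m) + x^(-2^m)`, which is zero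
once `2^m = n + 1`. So `A^(n+1) = 0`, and a nilpotent `n × n` matrix over a reduced ring already
satisfies `A^n = 0` by Cayley–Hamilton.
-/

open AddMonoidAlgebra SimpleGraph Matrix

namespace AddMonoidAlgebra

variable {R G : Type*} [Semiring R] [AddCommGroup G]

noncomputable def symmSingle (g : G) : R[G] := single g 1 + single (-g) 1

theorem symmSingle_neg (g : G) : (symmSingle (-g) : R[G]) = symmSingle g := by
  rw [symmSingle, symmSingle, neg_neg, add_comm]

theorem symmSingle_mul_symmSingle (g h : G) :
    (symmSingle g * symmSingle h : R[G]) = symmSingle (g + h) + symmSingle (g - h) := by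
  simp only [symmSingle, add_mul, mul_add, single_mul_single, one_mul, neg_add, sub_eq_add_neg,
    neg_neg]
  abel

theorem symmSingle_eq_zero [CharP R 2] {g : G} (hg : g + g = 0) : (symmSingle g : R[G]) = 0 := by
  rw [symmSingle, neg_eq_of_add_eq_zero_right hg, ← single_add, CharTwo.add_self_eq_zero,
    single_zero]

theorem symmSingle_pow_two_pow {R : Type*} [CommSemiring R] [CharP R 2] (g : G) (k : ℕ) :
    (symmSingle g : R[G]) ^ 2 ^ k = symmSingle (2 ^ k • g) := by
  have : CharP R[G] 2 := charP_of_injective_algebraMap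
    (FaithfulSMul.algebraMap_injective R R[G]) 2
  rw [symmSingle, symmSingle, add_pow_char_pow, single_pow, single_pow, one_pow, smul_neg]

end AddMonoidAlgebra

theorem Matrix.pow_card_eq_zero_of_isNilpotent {ι R : Type*} [Fintype ι] [DecidableEq ι]
    [CommRing R] [IsReduced R] {M : Matrix ι ι R} (hM : IsNilpotent M) :
    M ^ Fintype.card ι = 0 := by
  have hχ : M.charpoly = Polynomial.X ^ Fintype.card ι :=
    sub_eq_zero.mp <| Polynomial.ext fun i ↦
      (Polynomial.isNilpotent_iff.mp (isNilpotent_charpoly_sub_pow_of_isNilpotent hM) i).eq_zero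
  simpa [hχ] using aeval_self_charpoly M

namespace SimpleGraph

theorem sum_ite_pathGraph_adj {M : Type*} [AddCommMonoid M] {n : ℕ}
    [DecidableRel (pathGraph n).Adj] (g : ℕ → M) (h₀ : g 0 = 0) (hn : g (n + 1) = 0) (l : Fin n) :
    ∑ j : Fin n, (if (pathGraph n).Adj j l then g (j + 1) else 0) = g l + g (l + 2) := by
  set f : ℕ → M := fun k ↦ if k = l ∨ k = l + 2 then g k else 0
  have hf : ∀ j : Fin n, (if (pathGraph n).Adj j l then g (j + 1) else 0) = f (j + 1) := by
    intro j
    simp only [f, pathGraph_adj]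
    congr 1
    apply propext
    omega
  calc ∑ j : Fin n, (if (pathGraph n).Adj j l then g (j + 1) else 0)
      = ∑ k ∈ Finset.range (n + 2), f k := by
        rw [Finset.sum_range_succ, Finset.sum_range_succ', Fintype.sum_congr _ _ hf,
          Fin.sum_univ_eq_sum_range (fun k ↦ f (k + 1))]
        simp [f, h₀, hn]
    _ = f l + f (l + 2) :=
        Finset.sum_eq_add_of_mem _ _ (by simp; omega) (by simp) (by omega)
          fun k _ hk ↦ if_neg (by omega)
    _ = g l + g (l + 2) := by simp [f]

variable {R : Type*} [CommSemiring R] {n : ℕ}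

noncomputable def symmExtension (v : Fin n → R) : R[ZMod (2 * (n + 1))] :=
  ∑ j, v j • symmSingle ((j + 1 : ℕ) : ZMod (2 * (n + 1)))

theorem coeff_symmExtension (v : Fin n → R) (i : Fin n) :
    (symmExtension v).coeff ((i + 1 : ℕ) : ZMod (2 * (n + 1))) = v i := by
  have hpos : ∀ j : Fin n, ((j + 1 : ℕ) : ZMod (2 * (n + 1))) = (i + 1 : ℕ) ↔ j = i := by
    intro j
    rw [ZMod.natCast_eq_natCast_iff', Nat.mod_eq_of_lt (by omega), Nat.mod_eq_of_lt (by omega),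
      Fin.ext_iff]
    omega
  have hneg : ∀ j : Fin n, -((j + 1 : ℕ) : ZMod (2 * (n + 1))) ≠ (i + 1 : ℕ) := by
    intro j h
    rw [neg_eq_iff_add_eq_zero, ← Nat.cast_add, ZMod.natCast_eq_zero_iff] at h
    exact absurd (Nat.le_of_dvd (by omega) h) (by omega)
  simp only [symmExtension, symmSingle, AddMonoidAlgebra.coeff_sum, Finset.sum_apply',
    coeff_smul_apply, AddMonoidAlgebra.coeff_add, coeff_single, Finsupp.add_apply,
    Finsupp.single_apply, hpos, hneg]
  simp

variable [CharP R 2] [DecidableRel (pathGraph n).Adj]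

theorem sum_adjMatrix_smul_symmSingle (l : Fin n) :
    ∑ j, (pathGraph n).adjMatrix R j l • (symmSingle ((j + 1 : ℕ) : ZMod (2 * (n + 1))) : R[_]) =
      symmSingle 1 * symmSingle ((l + 1 : ℕ) : ZMod (2 * (n + 1))) := by
  have h₀ : (symmSingle ((0 : ℕ) : ZMod (2 * (n + 1))) : R[_]) = 0 :=
    symmSingle_eq_zero (by simp)
  have hn : (symmSingle ((n + 1 : ℕ) : ZMod (2 * (n + 1))) : R[_]) = 0 :=
    symmSingle_eq_zero (by rw [← Nat.cast_add, ← two_mul]; exact ZMod.natCast_self _)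
  simp only [adjMatrix_apply, ite_smul, one_smul, zero_smul]
  rw [sum_ite_pathGraph_adj (fun k ↦ symmSingle (k : ZMod (2 * (n + 1)))) h₀ hn,
    symmSingle_mul_symmSingle, ← symmSingle_neg (1 - _)]
  push_cast
  ring_nf

theorem symmExtension_adjMatrix_mulVec (v : Fin n → R) :
    symmExtension ((pathGraph n).adjMatrix R *ᵥ v) = symmSingle 1 * symmExtension v := by
  simp only [symmExtension, mulVec, dotProduct, Finset.sum_smul, Finset.mul_sum, mul_smul_comm,
    ← sum_adjMatrix_smul_symmSingle, Finset.smul_sum, smul_smul]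
  rw [Finset.sum_comm]
  simp only [mul_comm]

theorem symmExtension_adjMatrix_pow_mulVec (k : ℕ) (v : Fin n → R) :
    symmExtension ((pathGraph n).adjMatrix R ^ k *ᵥ v) = symmSingle 1 ^ k * symmExtension v := by
  induction k with
  | zero => simp
  | succ k ih =>
    rw [pow_succ', ← mulVec_mulVec, symmExtension_adjMatrix_mulVec, ih, pow_succ', mul_assoc]

theorem pathGraph_adjMatrix_pow_eq_zero_of_eq_two_pow {m : ℕ} (h : n + 1 = 2 ^ m) :
    (pathGraph n).adjMatrix R ^ (n + 1) = 0 := by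
  have hw : (symmSingle (1 : ZMod (2 * (n + 1))) : R[_]) ^ (n + 1) = 0 := by
    generalize n + 1 = N at h ⊢
    subst h
    rw [symmSingle_pow_two_pow]
    exact symmSingle_eq_zero (by rw [← add_nsmul, ← two_mul, nsmul_one]; exact ZMod.natCast_self _)
  ext i j
  have h := coeff_symmExtension ((pathGraph n).adjMatrix R ^ (n + 1) *ᵥ Pi.single j 1) i
  rw [symmExtension_adjMatrix_pow_mulVec, hw, zero_mul, mulVec_single_one] at h
  exact h.symm

end SimpleGraph

theorem pathGraph_adjMatrix_pow_eq_zero_general (m : ℕ) (n : ℕ) (hn : n = 2 ^ m - 1)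
    (A : Matrix (Fin n) (Fin n) (ZMod 2))
    (hA : ∀ i j, A i j = if ((i : ℤ) - (j : ℤ)).natAbs = 1 then 1 else 0) :
    A ^ n = 0 := by
  classical
  have hA_eq : A = (pathGraph n).adjMatrix (ZMod 2) := by
    ext i j
    rw [hA, adjMatrix_apply, pathGraph_adj]
    congr 1
    apply propext
    omega
  have hn_succ : n + 1 = 2 ^ m := by
    have := m.one_le_two_pow
    omega
  have hA_nil : IsNilpotent A :=
    ⟨n + 1, hA_eq ▸ pathGraph_adjMatrix_pow_eq_zero_of_eq_two_pow hn_succ⟩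
  simpa using pow_card_eq_zero_of_isNilpotent hA_nil

/-- For `n = 2^m - 1`, the `n × n` matrix over `ℤ/2ℤ` with `a i j = 1` iff `|i - j| = 1`
satisfies `A ^ n = 0`. -/
theorem pathGraph_adjMatrix_pow_eq_zero (m : ℕ) (hm : 0 < m) (n : ℕ) (hn : n = 2 ^ m - 1)
    (A : Matrix (Fin n) (Fin n) (ZMod 2))
    (hA : ∀ i j, A i j = if ((i : ℤ) - (j : ℤ)).natAbs = 1 then 1 else 0) :
    A ^ n = 0 :=
  pathGraph_adjMatrix_pow_eq_zero_general m n hn A hA
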